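/- Under assumptions (A3)–(A5) and γ ∈ [0,1/2), the ratio k*_m/a_m(c) converges as m → ∞, with limit: 0 under Case (I) (m^{β(1−γ)−1/2+γ}|Δ_m| → 0); d₁ ∈ (0,1) under Case (II) (m^{β(1−γ)−1/2+γ}|Δ_m| → C̃₁ ∈ (0,∞)), where d₁ is the unique solution in (0,1) of d₁ = 1 − (cσ/C₁)·d₁^{1−γ} with C₁ = θ^{1−γ}·C̃₁; and 1 under Case (III) (m^{β(1−γ)−1/2+γ}|Δ_m| → ∞). -/

import Mathlib

/-! Write `r_m = k*_m / a_m`, `u_m = m^(β(1-γ)-1/2+γ) |Δ_m|` and `v_m = k*_m / m^β`. Dividing the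
defining equation of `a_m` by suitable powers turns it into the balance
`w_m (1 - r_m) = σ c r_m^(1-γ)` with `w_m = u_m v_m^(1-γ)`. Since `r ↦ C r + σ c r^(1-γ)` is
strictly increasing on `[0, ∞)`, the balance pins `r_m` down continuously in terms of `w_m`, and
`w_m → 0`, `→ C₁`, `→ ∞` force `r_m → 0`, `→ d₁`, `→ 1`. In cases (II) and (III) the bound on
`Δ_m` forces the exponent `β(1-γ) - 1/2 + γ` to be nonnegative, so `β > 0` and `v_m → θ`. -/

open MeasureTheory ProbabilityTheory Filter Finset Real Topology

noncomputable section

/-- The standard normal distribution function `Φ`. -/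
def stdNormalCDF (x : ℝ) : ℝ := ((gaussianReal 0 1) (Set.Iic x)).toReal

/-- A standard Wiener process (standard Brownian motion) on `[0,∞)`:
it starts at `0`, has almost surely continuous paths, independent increments, and
`W t - W s` is centered Gaussian with variance `t - s` for `0 ≤ s < t`. -/
def IsStandardWiener {Ω : Type*} [MeasurableSpace Ω] (P : Measure Ω)
    (W : ℝ → Ω → ℝ) : Prop :=
  (∀ᵐ ω ∂P, W 0 ω = 0) ∧
  (∀ᵐ ω ∂P, Continuous fun t => W t ω) ∧
  (∀ n : ℕ, ∀ t : Fin (n + 1) → ℝ, (∀ i, 0 ≤ t i) → StrictMono t →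
    iIndepFun
      (fun i : Fin n => fun ω => W (t i.succ) ω - W (t i.castSucc) ω) P) ∧
  (∀ s t : ℝ, 0 ≤ s → s < t →
    Measure.map (fun ω => W t ω - W s ω) P = gaussianReal 0 (t - s).toNNReal)

/-- The change point `k*_m = ⌊θ m^β⌋` from Assumption (A3). -/
def kstar (θ β : ℝ) (m : ℕ) : ℕ := ⌊θ * (m : ℝ) ^ β⌋₊

/-- The boundary function `g(m,k) = √m (1 + k/m) (k/(k+m))^γ`. -/
def gfun (γ : ℝ) (m k : ℕ) : ℝ :=
  Real.sqrt m * (1 + (k : ℝ) / m) * ((k : ℝ) / ((k : ℝ) + m)) ^ γ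

/-- The observations in the location model: `X_i = μ + ε_i` before the change at
time `m + k*_m`, and `X_i = μ + ε_i + Δ_m` from the change on. -/
def Xloc {Ω : Type*} (μ : ℝ) (ε : ℕ → Ω → ℝ) (Δ : ℕ → ℝ) (kst : ℕ → ℕ)
    (m i : ℕ) (ω : Ω) : ℝ :=
  if m + kst m ≤ i then μ + ε i ω + Δ m else μ + ε i ω

/-- The CUSUM detector `Q(m,k) = ∑_{i=m+1}^{m+k} X_i - (k/m) ∑_{i=1}^m X_i`. -/
def Qdet {Ω : Type*} (X : ℕ → ℕ → Ω → ℝ) (m k : ℕ) (ω : Ω) : ℝ :=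
  (∑ i ∈ Finset.Icc (m + 1) (m + k), X m i ω) -
    (k : ℝ) / m * ∑ i ∈ Finset.Icc 1 m, X m i ω

/-- The one-sided Page CUSUM detector `S₁(m,k) = Q(m,k) - min_{0 ≤ i ≤ k} Q(m,i)`. -/
def S1det {Ω : Type*} (X : ℕ → ℕ → Ω → ℝ) (m k : ℕ) (ω : Ω) : ℝ :=
  Qdet X m k ω -
    (Finset.Icc 0 k).inf' (Finset.nonempty_Icc.mpr (Nat.zero_le k))
      (fun i => Qdet X m i ω)

/-- The two-sided Page CUSUM detector `S₂(m,k) = max_{0 ≤ i ≤ k} |Q(m,k) - Q(m,i)|`. -/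
def S2det {Ω : Type*} (X : ℕ → ℕ → Ω → ℝ) (m k : ℕ) (ω : Ω) : ℝ :=
  (Finset.Icc 0 k).sup' (Finset.nonempty_Icc.mpr (Nat.zero_le k))
    (fun i => |Qdet X m k ω - Qdet X m i ω|)

/-- The set of times `k ≥ 1` at which a detector `D` exceeds the boundary
`σ̂_m c g(m,k)`; the stopping time is finite iff this set is nonempty, in which
case it equals the infimum of this set. -/
def hitSet {Ω : Type*} (D : ℕ → ℕ → Ω → ℝ) (σhat : ℕ → Ω → ℝ) (c γ : ℝ)
    (m : ℕ) (ω : Ω) : Set ℕ :=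
  {k : ℕ | 1 ≤ k ∧ σhat m ω * c * gfun γ m k ≤ D m k ω}

/-- The normalizing sequence `b_m(c)`. -/
def bseq (σ γ : ℝ) (Δ : ℕ → ℝ) (kst : ℕ → ℕ) (a : ℕ → ℝ) (m : ℕ) : ℝ :=
  σ * Real.sqrt (a m) * |Δ m|⁻¹ * (1 - γ * (1 - (kst m : ℝ) / a m))⁻¹

/-- The sequence `N(m,x)` used in the proofs. -/
def Nseq (σ c γ : ℝ) (Δ : ℕ → ℝ) (kst : ℕ → ℕ) (a : ℕ → ℝ) (x : ℝ) (m : ℕ) : ℝ :=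
  (σ * c * (m : ℝ) ^ ((1 : ℝ) / 2 - γ) / Δ m + (kst m : ℝ) / a m ^ γ -
      σ * x * a m ^ ((1 : ℝ) / 2 - γ) * (1 - γ) /
        (Δ m * (1 - γ * (1 - (kst m : ℝ) / a m)))) ^ ((1 : ℝ) / (1 - γ))

/-- The drifted Wiener process `W_Δ(j) = σ W_m(j) + (j - k* + 1) Δ_m 1{j ≥ k*}`. -/
def Wdrift {Ω : Type*} (σ : ℝ) (W : ℕ → ℝ → Ω → ℝ) (Δ : ℕ → ℝ) (kst : ℕ → ℕ)
    (m j : ℕ) (ω : Ω) : ℝ :=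
  σ * W m (j : ℝ) ω +
    (if kst m ≤ j then ((j : ℝ) - (kst m : ℝ) + 1) * Δ m else 0)

/-- The Wiener counterpart `P_W(m,k) = W_Δ(k) - min_{0 ≤ i ≤ k} W_Δ(i)` of the
Page CUSUM detector. -/
def PWdet {Ω : Type*} (σ : ℝ) (W : ℕ → ℝ → Ω → ℝ) (Δ : ℕ → ℝ) (kst : ℕ → ℕ)
    (m k : ℕ) (ω : Ω) : ℝ :=
  Wdrift σ W Δ kst m k ω -
    (Finset.Icc 0 k).inf' (Finset.nonempty_Icc.mpr (Nat.zero_le k))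
      (fun i => Wdrift σ W Δ kst m i ω)

theorem StrictMonoOn.tendsto_of_tendsto_comp {ι α β : Type*} [LinearOrder α] [TopologicalSpace α]
    [OrderTopology α] [LinearOrder β] [TopologicalSpace β] [OrderTopology β] {s : Set α}
    [hs : s.OrdConnected] {g : α → β} (hg : StrictMonoOn g s) {l : Filter ι} {x : ι → α}
    {d : α} (hx : ∀ i, x i ∈ s) (hd : d ∈ s) (h : Tendsto (fun i => g (x i)) l (𝓝 (g d))) :
    Tendsto x l (𝓝 d) := by
  refine tendsto_order.2 ⟨fun b hb => ?_, fun b hb => ?_⟩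
  · by_cases hbs : b ∈ s
    · filter_upwards [(tendsto_order.1 h).1 _ (hg hbs hd hb)] with i hi
      exact (hg.lt_iff_lt hbs (hx i)).1 hi
    · refine Eventually.of_forall fun i => lt_of_not_ge fun hib => hbs ?_
      exact hs.out (hx i) hd ⟨hib, hb.le⟩
  · by_cases hbs : b ∈ s
    · filter_upwards [(tendsto_order.1 h).2 _ (hg hd hbs hb)] with i hi
      exact (hg.lt_iff_lt (hx i) hbs).1 hi
    · refine Eventually.of_forall fun i => lt_of_not_ge fun hib => hbs ?_
      exact hs.out hd (hx i) ⟨hb.le, hib⟩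

section Balance

variable {ι : Type*} {l : Filter ι} {p κ : ℝ} {w r : ι → ℝ}

theorem tendsto_zero_of_balance (hp : 0 < p) (hκ : 0 < κ) (hr : ∀ i, r i ∈ Set.Icc 0 1)
    (hbal : ∀ᶠ i in l, w i * (1 - r i) = κ * r i ^ p) (hw : Tendsto w l (𝓝 0)) :
    Tendsto r l (𝓝 0) := by
  have hrp : Tendsto (fun i => r i ^ p) l (𝓝 (0 ^ p)) := by
    rw [Real.zero_rpow hp.ne']
    refine squeeze_zero' (Eventually.of_forall fun i => Real.rpow_nonneg (hr i).1 p) ?_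
      (by simpa using hw.abs.div_const κ)
    filter_upwards [hbal] with i hi
    rw [le_div_iff₀ hκ, mul_comm, ← hi]
    calc w i * (1 - r i) ≤ |w i| * (1 - r i) := by
          gcongr
          exacts [by linarith [(hr i).2], le_abs_self _]
      _ ≤ |w i| := mul_le_of_le_one_right (abs_nonneg _) (by linarith [(hr i).1])
  exact (Real.strictMonoOn_rpow_Ici_of_exponent_pos hp).tendsto_of_tendsto_comp
    (fun i => (hr i).1) Set.self_mem_Ici hrp

theorem tendsto_of_balance {C d : ℝ} (hp : 0 < p) (hκ : 0 ≤ κ) (hC : 0 < C)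
    (hr : ∀ i, r i ∈ Set.Icc 0 1) (hbal : ∀ᶠ i in l, w i * (1 - r i) = κ * r i ^ p)
    (hw : Tendsto w l (𝓝 C)) (hd : 0 ≤ d) (hfix : C * d + κ * d ^ p = C) :
    Tendsto r l (𝓝 d) := by
  have hg : StrictMonoOn (fun x : ℝ => C * x + κ * x ^ p) (Set.Ici 0) :=
    (strictMono_mul_left_of_pos hC).strictMonoOn _ |>.add_monotone
      fun x hx y _ hxy => by gcongr
  have hdiff : Tendsto (fun i => (C - w i) * r i) l (𝓝 0) := by
    refine squeeze_zero_norm' (Eventually.of_forall fun i => ?_)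
      (by simpa using (tendsto_sub_nhds_zero_iff.2 hw).norm)
    rw [norm_mul, norm_sub_rev]
    exact mul_le_of_le_one_right (norm_nonneg _) (by
      rw [Real.norm_of_nonneg (hr i).1]; exact (hr i).2)
  have hsum : Tendsto (fun i => w i + (C - w i) * r i) l (𝓝 C) := by simpa using hw.add hdiff
  refine hg.tendsto_of_tendsto_comp (fun i => (hr i).1) hd ?_
  rw [hfix]
  refine hsum.congr' ?_
  filter_upwards [hbal] with i hi
  linear_combination hi

theorem tendsto_one_of_balance (hp : 0 ≤ p) (hκ : 0 ≤ κ) (hr : ∀ i, r i ∈ Set.Icc 0 1)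
    (hbal : ∀ᶠ i in l, w i * (1 - r i) = κ * r i ^ p) (hw : Tendsto w l atTop) :
    Tendsto r l (𝓝 1) := by
  have hlow : Tendsto (fun i => 1 - κ / w i) l (𝓝 1) := by
    simpa using tendsto_const_nhds.sub (tendsto_const_nhds.div_atTop hw)
  refine tendsto_of_tendsto_of_tendsto_of_le_of_le' hlow tendsto_const_nhds ?_
    (Eventually.of_forall fun i => (hr i).2)
  filter_upwards [hbal, hw.eventually_gt_atTop 0] with i hi hwi
  have : κ * r i ^ p ≤ κ := mul_le_of_le_one_right hκ (Real.rpow_le_one (hr i).1 (hr i).2 hp)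
  rw [sub_le_comm, le_div_iff₀ hwi, mul_comm]
  linarith

end Balance

theorem div_mem_Icc_of_eq_add {a k X : ℝ} (ha : 0 < a) (hk : 0 ≤ k) (hX : 0 ≤ X)
    (h : a = X + k) : k / a ∈ Set.Icc 0 1 :=
  ⟨div_nonneg hk ha.le, (div_le_one ha).2 (h ▸ le_add_of_nonneg_left hX)⟩

theorem kstar_div_rpow_le {θ β : ℝ} (hθ : 0 ≤ θ) {m : ℕ} (hm : m ≠ 0) :
    (kstar θ β m : ℝ) / (m : ℝ) ^ β ≤ θ := by
  have hmβ : (0 : ℝ) < (m : ℝ) ^ β := by positivity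
  rw [div_le_iff₀ hmβ]
  exact Nat.floor_le (by positivity)

theorem tendsto_kstar_div_rpow {θ β : ℝ} (hθ : 0 ≤ θ) (hβ : 0 < β) :
    Tendsto (fun m : ℕ => (kstar θ β m : ℝ) / (m : ℝ) ^ β) atTop (𝓝 θ) := by
  have hmβ : Tendsto (fun m : ℕ => (m : ℝ) ^ β) atTop atTop :=
    (tendsto_rpow_atTop hβ).comp tendsto_natCast_atTop_atTop
  have hlow : Tendsto (fun m : ℕ => θ - ((m : ℝ) ^ β)⁻¹) atTop (𝓝 θ) := by
    simpa using tendsto_const_nhds.sub hmβ.inv_tendsto_atTop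
  refine tendsto_of_tendsto_of_tendsto_of_le_of_le' hlow tendsto_const_nhds ?_ ?_
  · filter_upwards [hmβ.eventually_gt_atTop 0] with m hm
    rw [le_div_iff₀ hm, sub_mul, inv_mul_cancel₀ hm.ne']
    have := Nat.lt_floor_add_one (θ * (m : ℝ) ^ β)
    unfold kstar
    linarith
  · filter_upwards [eventually_ne_atTop 0] with m hm using kstar_div_rpow_le hθ hm

theorem balance_of_eq_mul_rpow_add {a k A γ : ℝ} (ha : 0 < a) (hk : 0 ≤ k)
    (h : a = A * a ^ γ + k) : k ^ (1 - γ) * (1 - k / a) = A * (k / a) ^ (1 - γ) := by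
  rw [Real.div_rpow hk ha.le, Real.rpow_sub ha, Real.rpow_one]
  have : 0 < a ^ γ := by positivity
  field_simp
  linear_combination k ^ (1 - γ) * h

theorem scaled_balance_of_eq_mul_rpow_add {σ c β γ δ a k m : ℝ} (hm : 0 < m) (hδ : δ ≠ 0)
    (ha : 0 < a) (hk : 0 ≤ k) (h : a = σ * c * m ^ ((1 : ℝ) / 2 - γ) * |δ|⁻¹ * a ^ γ + k) :
    m ^ (β * (1 - γ) - 1 / 2 + γ) * |δ| * (k / m ^ β) ^ (1 - γ) * (1 - k / a) =
      σ * c * (k / a) ^ (1 - γ) := by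
  have hsplit : m ^ (β * (1 - γ)) = m ^ (β * (1 - γ) - 1 / 2 + γ) * m ^ ((1 : ℝ) / 2 - γ) := by
    rw [← Real.rpow_add hm]; ring_nf
  rw [Real.div_rpow hk (by positivity), ← Real.rpow_mul hm.le, hsplit, mul_assoc _ _ (1 - k / a),
    div_mul_eq_mul_div, balance_of_eq_mul_rpow_add ha hk h]
  have : 0 < |δ| := abs_pos.2 hδ
  field_simp

theorem tendsto_rpow_mul_abs_zero {e M : ℝ} {Δ : ℕ → ℝ} (he : e < 0) (hM : ∀ m, |Δ m| ≤ M) :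
    Tendsto (fun m : ℕ => (m : ℝ) ^ e * |Δ m|) atTop (𝓝 0) := by
  have hpow : Tendsto (fun m : ℕ => (m : ℝ) ^ e) atTop (𝓝 0) := by
    simpa [Function.comp_def] using
      (tendsto_rpow_neg_atTop (neg_pos.2 he)).comp tendsto_natCast_atTop_atTop
  refine squeeze_zero' (Eventually.of_forall fun m => by positivity)
    (Eventually.of_forall fun m => ?_) (by simpa using hpow.mul_const M)
  exact mul_le_mul_of_nonneg_left (hM m) (by positivity)

theorem pos_of_not_tendsto_rpow_mul_abs_zero {β γ M : ℝ} {Δ : ℕ → ℝ} (hγ : γ < 1 / 2)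
    (hM : ∀ m, |Δ m| ≤ M)
    (h : ¬Tendsto (fun m : ℕ => (m : ℝ) ^ (β * (1 - γ) - 1 / 2 + γ) * |Δ m|) atTop (𝓝 0)) :
    0 < β := by
  by_contra! hβ
  exact h (tendsto_rpow_mul_abs_zero (by nlinarith) hM)

theorem kstar_div_aseq_limits_general
    (σ c θ β γ : ℝ) (Δ : ℕ → ℝ) (a : ℕ → ℝ)
    (hγ : γ ∈ Set.Ico (0 : ℝ) (1 / 2)) (hσ : 0 < σ) (hc : 0 < c) (hθ : 0 < θ)
    (hΔne : ∀ m : ℕ, Δ m ≠ 0)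
    (hA5 : ∃ M : ℝ, ∀ m : ℕ, |Δ m| ≤ M)
    (ha : ∀ m : ℕ, 0 < a m ∧
      a m = σ * c * (m : ℝ) ^ ((1 : ℝ) / 2 - γ) * |Δ m|⁻¹ * a m ^ γ + (kstar θ β m : ℝ))
    :
    (Tendsto (fun m : ℕ => (m : ℝ) ^ (β * (1 - γ) - 1 / 2 + γ) * |Δ m|) atTop (𝓝 0) →
      Tendsto (fun m : ℕ => (kstar θ β m : ℝ) / a m) atTop (𝓝 0)) ∧
    (∀ Ct1 : ℝ, 0 < Ct1 →
      Tendsto (fun m : ℕ => (m : ℝ) ^ (β * (1 - γ) - 1 / 2 + γ) * |Δ m|) atTop (𝓝 Ct1) →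
      ∀ d1 : ℝ, d1 ∈ Set.Ioo (0 : ℝ) 1 →
        d1 = 1 - c * σ / (θ ^ (1 - γ) * Ct1) * d1 ^ (1 - γ) →
        Tendsto (fun m : ℕ => (kstar θ β m : ℝ) / a m) atTop (𝓝 d1)) ∧
    (Tendsto (fun m : ℕ => (m : ℝ) ^ (β * (1 - γ) - 1 / 2 + γ) * |Δ m|) atTop atTop →
      Tendsto (fun m : ℕ => (kstar θ β m : ℝ) / a m) atTop (𝓝 1)) := by
  obtain ⟨M, hM⟩ := hA5
  have hp : 0 < 1 - γ := by linarith [hγ.2]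
  have hσc : 0 < σ * c := mul_pos hσ hc
  have hr (m : ℕ) : (kstar θ β m : ℝ) / a m ∈ Set.Icc 0 1 := by
    have := (ha m).1
    exact div_mem_Icc_of_eq_add this (Nat.cast_nonneg _) (by positivity) (ha m).2
  have hbal : ∀ᶠ m : ℕ in atTop,
      (m : ℝ) ^ (β * (1 - γ) - 1 / 2 + γ) * |Δ m| * ((kstar θ β m : ℝ) / m ^ β) ^ (1 - γ) *
        (1 - kstar θ β m / a m) = σ * c * ((kstar θ β m : ℝ) / a m) ^ (1 - γ) := by
    filter_upwards [eventually_gt_atTop 0] with m hm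
    exact scaled_balance_of_eq_mul_rpow_add (by exact_mod_cast hm) (hΔne m) (ha m).1
      (Nat.cast_nonneg _) (ha m).2
  have hv (hβ : 0 < β) : Tendsto (fun m : ℕ => ((kstar θ β m : ℝ) / m ^ β) ^ (1 - γ)) atTop
      (𝓝 (θ ^ (1 - γ))) :=
    (tendsto_kstar_div_rpow hθ.le hβ).rpow_const (Or.inr hp.le)
  refine ⟨fun hI => ?_, fun Ct1 hCt1 hII d1 hd1 hfix => ?_, fun hIII => ?_⟩
  · refine tendsto_zero_of_balance hp hσc hr hbal
      (squeeze_zero' (Eventually.of_forall fun m => by positivity) ?_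
        (by simpa only [zero_mul] using hI.mul_const (θ ^ (1 - γ))))
    filter_upwards [eventually_ne_atTop 0] with m hm
    gcongr
    exact kstar_div_rpow_le hθ.le hm
  · have hβ := pos_of_not_tendsto_rpow_mul_abs_zero hγ.2 hM
      fun h0 => hCt1.ne' (tendsto_nhds_unique hII h0)
    refine tendsto_of_balance hp hσc.le (by positivity) hr hbal (hII.mul (hv hβ)) hd1.1.le ?_
    have : 0 < θ ^ (1 - γ) * Ct1 := by positivity
    field_simp at hfix
    linear_combination hfix
  · have hβ := pos_of_not_tendsto_rpow_mul_abs_zero hγ.2 hM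
      (not_tendsto_nhds_of_tendsto_atTop hIII 0)
    exact tendsto_one_of_balance hp.le hσc.le hr hbal
      (hIII.atTop_mul_pos (by positivity) (hv hβ))

/-- Lemma A.1 a) (iv): the limit of `k*_m/a_m(c)` in the three cases (I), (II), (III). -/
theorem kstar_div_aseq_limits
    (σ c θ β γ : ℝ) (Δ : ℕ → ℝ) (a : ℕ → ℝ)
    (hγ : γ ∈ Set.Ico (0 : ℝ) (1 / 2)) (hσ : 0 < σ) (hc : 0 < c) (hθ : 0 < θ)
    (hβ : β ∈ Set.Ico (0 : ℝ) 1)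
    (hΔne : ∀ m : ℕ, Δ m ≠ 0)
    (hA4 : Tendsto (fun m : ℕ => Real.sqrt m * |Δ m|) atTop atTop)
    (hA5 : ∃ M : ℝ, ∀ m : ℕ, |Δ m| ≤ M)
    (ha : ∀ m : ℕ, 0 < a m ∧
      a m = σ * c * (m : ℝ) ^ ((1 : ℝ) / 2 - γ) * |Δ m|⁻¹ * a m ^ γ + (kstar θ β m : ℝ))
    :
    (Tendsto (fun m : ℕ => (m : ℝ) ^ (β * (1 - γ) - 1 / 2 + γ) * |Δ m|) atTop (𝓝 0) →
      Tendsto (fun m : ℕ => (kstar θ β m : ℝ) / a m) atTop (𝓝 0)) ∧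
    (∀ Ct1 : ℝ, 0 < Ct1 →
      Tendsto (fun m : ℕ => (m : ℝ) ^ (β * (1 - γ) - 1 / 2 + γ) * |Δ m|) atTop (𝓝 Ct1) →
      ∀ d1 : ℝ, d1 ∈ Set.Ioo (0 : ℝ) 1 →
        d1 = 1 - c * σ / (θ ^ (1 - γ) * Ct1) * d1 ^ (1 - γ) →
        Tendsto (fun m : ℕ => (kstar θ β m : ℝ) / a m) atTop (𝓝 d1)) ∧
    (Tendsto (fun m : ℕ => (m : ℝ) ^ (β * (1 - γ) - 1 / 2 + γ) * |Δ m|) atTop atTop →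
      Tendsto (fun m : ℕ => (kstar θ β m : ℝ) / a m) atTop (𝓝 1)) :=
  kstar_div_aseq_limits_general σ c θ β γ Δ a hγ hσ hc hθ hΔne hA5 ha

end
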